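/- arXiv:1306.5152 — 2 statements merged into one kernel-verified Lean document; each statement's English description precedes it below -/
import Mathlib

section
/- Let $p \in (0,1)$ and $t_0 > 0$. Define $c = \ln\frac{1-(1-p)e^{-t_0}}{p}$. Then $c > 0$, and for a random variable $V \geq 0$ with $P(V < t_0) = p$, one has $E[\exp(c\,\mathbf{1}_{\{V<t_0\}} - V)] \leq 1$. -/
/-!
Split on the event `A = {V < t₀}`.  On `A` the integrand is at most `exp c`, and on its complement
(where `V ≥ t₀`) at most `exp (-t₀)`; so the expectation is at most
`p · exp c + (1 - p) · exp (-t₀)`.  The constant `c` is chosen exactly so that this bound is `1`.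
-/

open MeasureTheory

lemma lt_one_sub_one_sub_mul {p a : ℝ} (hp : p < 1) (ha : a < 1) : p < 1 - (1 - p) * a := by
  nlinarith

lemma exp_mul_indicator_sub_le_piecewise {α : Type*} {V : α → ℝ} {c t₀ : ℝ} {ω : α}
    (hω : 0 ≤ V ω) [DecidablePred (· ∈ {ω | V ω < t₀})] :
    Real.exp (c * Set.indicator {ω | V ω < t₀} (fun _ => (1 : ℝ)) ω - V ω) ≤
      {ω | V ω < t₀}.piecewise (fun _ => Real.exp c) (fun _ => Real.exp (-t₀)) ω := by
  by_cases h : ω ∈ {ω | V ω < t₀}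
  · simpa [h] using hω
  · simpa [h] using (not_lt.1 h)

lemma integral_le_of_ae_le_piecewise_const {Ω : Type*} {mΩ : MeasurableSpace Ω} {μ : Measure Ω}
    [IsFiniteMeasure μ] {f : Ω → ℝ} {s : Set Ω} [DecidablePred (· ∈ s)] {a b : ℝ}
    (hf : AEStronglyMeasurable f μ) (hf₀ : 0 ≤ᵐ[μ] f) (hs : MeasurableSet s)
    (hle : ∀ᵐ ω ∂μ, f ω ≤ s.piecewise (fun _ => a) (fun _ => b) ω) :
    ∫ ω, f ω ∂μ ≤ μ.real s * a + μ.real sᶜ * b := by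
  have hg : Integrable (s.piecewise (fun _ => a) (fun _ => b)) μ :=
    Integrable.piecewise hs (integrable_const a).integrableOn (integrable_const b).integrableOn
  have hfi : Integrable f μ := hg.mono' hf <| by
    filter_upwards [hf₀, hle] with ω h₀ h
    rwa [Real.norm_of_nonneg h₀]
  calc ∫ ω, f ω ∂μ ≤ ∫ ω, s.piecewise (fun _ => a) (fun _ => b) ω ∂μ :=
        integral_mono_ae hfi hg hle
    _ = μ.real s * a + μ.real sᶜ * b := by
        rw [integral_piecewise hs (integrable_const a).integrableOn
          (integrable_const b).integrableOn, setIntegral_const, setIntegral_const, smul_eq_mul,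
          smul_eq_mul]

/-- Let `p ∈ (0,1)`, `t₀ > 0` and `c = ln((1-(1-p)e^{-t₀})/p)`.  Then `c > 0`, and for a
nonnegative random variable `V` with `P(V < t₀) = p` one has
`E[exp(c·1_{V<t₀} - V)] ≤ 1`. -/
theorem stmt1 {Ω : Type*} {mΩ : MeasurableSpace Ω} (P : Measure Ω) [IsProbabilityMeasure P]
    (V : Ω → ℝ) (hV : Measurable V) (hpos : ∀ᵐ ω ∂P, 0 ≤ V ω)
    (t₀ p : ℝ) (ht₀ : 0 < t₀) (hp0 : 0 < p) (hp1 : p < 1)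
    (hp : P {ω | V ω < t₀} = ENNReal.ofReal p) :
    0 < Real.log ((1 - (1 - p) * Real.exp (-t₀)) / p) ∧
    ∫ ω, Real.exp (Real.log ((1 - (1 - p) * Real.exp (-t₀)) / p) *
      Set.indicator {ω | V ω < t₀} (fun _ => (1 : ℝ)) ω - V ω) ∂P ≤ 1 := by
  set q := 1 - (1 - p) * Real.exp (-t₀)
  have hpq : p < q := lt_one_sub_one_sub_mul hp1 (Real.exp_lt_one_iff.2 (neg_lt_zero.2 ht₀))
  have hexp_c : Real.exp (Real.log (q / p)) = q / p := Real.exp_log (div_pos (hp0.trans hpq) hp0)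
  refine ⟨Real.log_pos ((one_lt_div hp0).2 hpq), ?_⟩
  set A := {ω | V ω < t₀}
  have hA : MeasurableSet A := measurableSet_lt hV measurable_const
  have hPA : P.real A = p := by rw [measureReal_def, hp, ENNReal.toReal_ofReal hp0.le]
  calc _ ≤ P.real A * Real.exp (Real.log (q / p)) + P.real Aᶜ * Real.exp (-t₀) := by
        refine integral_le_of_ae_le_piecewise_const (by fun_prop) (.of_forall fun _ => by positivity)
          hA ?_
        filter_upwards [hpos] with ω hω
        exact exp_mul_indicator_sub_le_piecewise hω
    _ = 1 := by
        rw [hexp_c, probReal_compl_eq_one_sub hA, hPA, mul_div_cancel₀ _ hp0.ne']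
        ring
end

section
/- If $(F_n)$ is a sequence of distribution functions with $F_n \leq F$ pointwise for all $n$ and $F_n \to F$ weakly (in distribution), then the generalized inverses $F_n^{-1}(t) = \inf\{u : F_n(u) > t\}$ converge pointwise to $F^{-1}(t)$ for every $t \in [0,1)$. -/
open Filter

/-- If `(Fₙ)` are distribution functions of nonnegative random variables with `Fₙ ≤ F`
pointwise and `Fₙ → F` weakly (convergence at every continuity point of `F`), then the
generalized inverses `Fₙ⁻¹(t) = inf{u : Fₙ(u) > t}` converge to `F⁻¹(t)` for every
`t ∈ [0,1)`. -/
theorem stmt10 (F : ℝ → ℝ) (Fn : ℕ → ℝ → ℝ)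
    (hFmono : Monotone F) (hFrc : ∀ x, ContinuousWithinAt F (Set.Ici x) x)
    (hFtop : Tendsto F atTop (nhds 1)) (hF0 : ∀ t < 0, F t = 0)
    (hmono : ∀ n, Monotone (Fn n)) (hrc : ∀ n x, ContinuousWithinAt (Fn n) (Set.Ici x) x)
    (htop : ∀ n, Tendsto (Fn n) atTop (nhds 1)) (h0 : ∀ n, ∀ t < 0, Fn n t = 0)
    (hle : ∀ n t, Fn n t ≤ F t)
    (hweak : ∀ t, ContinuousAt F t → Tendsto (fun n => Fn n t) atTop (nhds (F t))) :
    ∀ t ∈ Set.Ico (0 : ℝ) 1,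
      Tendsto (fun n => sInf {u : ℝ | t < Fn n u}) atTop (nhds (sInf {u : ℝ | t < F u})) := by
  intro t ht
  obtain ⟨ht0, ht1⟩ := ht
  have hbdd : ∀ G : ℝ → ℝ, (∀ s < (0:ℝ), G s = 0) → BddBelow {u : ℝ | t < G u} := by
    intro G hG
    refine ⟨0, fun u hu => ?_⟩
    by_contra h
    push_neg at h
    rw [Set.mem_setOf_eq, hG u h] at hu
    exact absurd hu (not_lt.mpr ht0)
  have hne : ∀ G : ℝ → ℝ, Tendsto G atTop (nhds 1) → ({u : ℝ | t < G u}).Nonempty := by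
    intro G hG
    exact (hG.eventually (eventually_gt_nhds ht1)).exists
  set Q := sInf {u : ℝ | t < F u} with hQ
  have hlow : ∀ n, Q ≤ sInf {u : ℝ | t < Fn n u} := by
    intro n
    exact csInf_le_csInf (hbdd F hF0) (hne (Fn n) (htop n))
      (fun u hu => lt_of_lt_of_le hu (hle n u))
  rw [tendsto_order]
  constructor
  · intro b hb
    exact Filter.Eventually.of_forall fun n => lt_of_lt_of_le hb (hlow n)
  · intro b hb
    -- find a continuity point x of F in (Q, b)
    have hD : {x : ℝ | ¬ContinuousAt F x}.Countable := hFmono.countable_not_continuousAt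
    have hdense : Dense {x : ℝ | ¬ContinuousAt F x}ᶜ := hD.dense_compl ℝ
    obtain ⟨x, hx1, hx2⟩ : ∃ x, x ∈ Set.Ioo Q b ∧ x ∈ {x : ℝ | ¬ContinuousAt F x}ᶜ := by
      have := hdense.inter_open_nonempty (Set.Ioo Q b) isOpen_Ioo
        (Set.nonempty_Ioo.mpr hb)
      obtain ⟨x, hx⟩ := this
      exact ⟨x, hx.1, hx.2⟩
    have hcont : ContinuousAt F x := not_not.mp hx2
    have hFx : t < F x := by
      obtain ⟨u, hu, hux⟩ := exists_lt_of_csInf_lt (hne F hFtop) hx1.1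
      exact lt_of_lt_of_le hu (hFmono hux.le)
    have hev : ∀ᶠ n in atTop, t < Fn n x :=
      (hweak x hcont).eventually (eventually_gt_nhds hFx)
    filter_upwards [hev] with n hn
    calc sInf {u : ℝ | t < Fn n u} ≤ x := csInf_le (hbdd (Fn n) (h0 n)) hn
      _ < b := hx1.2
end
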